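/- Let a_1, a_2, a_3, a_4, a_{12}, b be real numbers. The series ∑_{i ∈ ℕ₊^4} i_1^{a_1} i_2^{a_2} i_3^{a_3} i_4^{a_4} (i_1 + i_2)^{a_{12}} / (i_1 + i_2 + i_3 + i_4)^b converges if and only if for every nonempty subset J ⊆ {1, 2, 3, 4} one has b > |J| + ∑_{j ∈ J} a_j + a_{12}·[J ∩ {1,2} ≠ ∅], where [P] equals 1 if the condition P holds and 0 otherwise. -/

import Mathlib

open Real
section

lemma key_lin {y1 y2 y3 y4 v1 v2 v3 v4 : ℝ} (h12 : y2 ≤ y1) (h23 : y3 ≤ y2)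
    (h34 : y4 ≤ y3) (h4 : 0 ≤ y4)
    (s1 : v1 ≤ 0) (s2 : v1 + v2 ≤ 0) (s3 : v1 + v2 + v3 ≤ 0)
    (s4 : v1 + v2 + v3 + v4 ≤ 0) :
    v1 * y1 + v2 * y2 + v3 * y3 + v4 * y4 ≤ 0 := by
  nlinarith [mul_nonpos_of_nonpos_of_nonneg s1 (sub_nonneg.2 h12),
    mul_nonpos_of_nonpos_of_nonneg s2 (sub_nonneg.2 h23),
    mul_nonpos_of_nonpos_of_nonneg s3 (sub_nonneg.2 h34),
    mul_nonpos_of_nonpos_of_nonneg s4 h4]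

lemma linC {u1 u2 u3 u4 c d y1 y2 y3 y4 : ℝ}
    (hy1 : 0 ≤ y1) (hy2 : 0 ≤ y2) (hy3 : 0 ≤ y3) (hy4 : 0 ≤ y4)
    (h1 : u1 + c + d ≤ 0) (h2 : u2 + c + d ≤ 0) (h3 : u3 + d ≤ 0) (h4 : u4 + d ≤ 0)
    (h12 : u1 + u2 + c + d ≤ 0) (h13 : u1 + u3 + c + d ≤ 0) (h14 : u1 + u4 + c + d ≤ 0)
    (h23 : u2 + u3 + c + d ≤ 0) (h24 : u2 + u4 + c + d ≤ 0) (h34 : u3 + u4 + d ≤ 0)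
    (h123 : u1 + u2 + u3 + c + d ≤ 0) (h124 : u1 + u2 + u4 + c + d ≤ 0)
    (h134 : u1 + u3 + u4 + c + d ≤ 0) (h234 : u2 + u3 + u4 + c + d ≤ 0)
    (h1234 : u1 + u2 + u3 + u4 + c + d ≤ 0) :
    u1 * y1 + u2 * y2 + u3 * y3 + u4 * y4 + c * max y1 y2
      + d * max (max y1 y2) (max y3 y4) ≤ 0 := by
  rcases le_total y2 y1 with o12 | o12 <;> rcases le_total y4 y3 with o34 | o34
  · -- y2 ≤ y1, y4 ≤ y3
    have m1 : max y1 y2 = y1 := max_eq_left o12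
    have m2 : max y3 y4 = y3 := max_eq_left o34
    rcases le_total y3 y1 with t | t
    · have m3 : max (max y1 y2) (max y3 y4) = y1 := by rw [m1, m2]; exact max_eq_left t
      rw [m3, m1]
      rcases le_total y3 y2 with s | s
      · linarith [key_lin o12 s o34 hy4 (by linarith : u1 + c + d ≤ 0)
          (by linarith : (u1 + c + d) + u2 ≤ 0) (by linarith : (u1 + c + d) + u2 + u3 ≤ 0)
          (by linarith : (u1 + c + d) + u2 + u3 + u4 ≤ 0)]
      · rcases le_total y4 y2 with s2 | s2
        · linarith [key_lin t s s2 hy4 (by linarith : u1 + c + d ≤ 0)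
            (by linarith : (u1 + c + d) + u3 ≤ 0) (by linarith : (u1 + c + d) + u3 + u2 ≤ 0)
            (by linarith : (u1 + c + d) + u3 + u2 + u4 ≤ 0)]
        · linarith [key_lin t o34 s2 hy2 (by linarith : u1 + c + d ≤ 0)
            (by linarith : (u1 + c + d) + u3 ≤ 0) (by linarith : (u1 + c + d) + u3 + u4 ≤ 0)
            (by linarith : (u1 + c + d) + u3 + u4 + u2 ≤ 0)]
    · have m3 : max (max y1 y2) (max y3 y4) = y3 := by rw [m1, m2]; exact max_eq_right t
      rw [m3, m1]
      rcases le_total y1 y4 with s | s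
      · linarith [key_lin o34 s o12 hy2 (by linarith : u3 + d ≤ 0)
          (by linarith : (u3 + d) + u4 ≤ 0) (by linarith : (u3 + d) + u4 + (u1 + c) ≤ 0)
          (by linarith : (u3 + d) + u4 + (u1 + c) + u2 ≤ 0)]
      · rcases le_total y4 y2 with s2 | s2
        · linarith [key_lin t o12 s2 hy4 (by linarith : u3 + d ≤ 0)
            (by linarith : (u3 + d) + (u1 + c) ≤ 0)
            (by linarith : (u3 + d) + (u1 + c) + u2 ≤ 0)
            (by linarith : (u3 + d) + (u1 + c) + u2 + u4 ≤ 0)]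
        · linarith [key_lin t s s2 hy2 (by linarith : u3 + d ≤ 0)
            (by linarith : (u3 + d) + (u1 + c) ≤ 0)
            (by linarith : (u3 + d) + (u1 + c) + u4 ≤ 0)
            (by linarith : (u3 + d) + (u1 + c) + u4 + u2 ≤ 0)]
  · -- y2 ≤ y1, y3 ≤ y4
    have m1 : max y1 y2 = y1 := max_eq_left o12
    have m2 : max y3 y4 = y4 := max_eq_right o34
    rcases le_total y4 y1 with t | t
    · have m3 : max (max y1 y2) (max y3 y4) = y1 := by rw [m1, m2]; exact max_eq_left t
      rw [m3, m1]
      rcases le_total y4 y2 with s | s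
      · linarith [key_lin o12 s o34 hy3 (by linarith : u1 + c + d ≤ 0)
          (by linarith : (u1 + c + d) + u2 ≤ 0) (by linarith : (u1 + c + d) + u2 + u4 ≤ 0)
          (by linarith : (u1 + c + d) + u2 + u4 + u3 ≤ 0)]
      · rcases le_total y3 y2 with s2 | s2
        · linarith [key_lin t s s2 hy3 (by linarith : u1 + c + d ≤ 0)
            (by linarith : (u1 + c + d) + u4 ≤ 0) (by linarith : (u1 + c + d) + u4 + u2 ≤ 0)
            (by linarith : (u1 + c + d) + u4 + u2 + u3 ≤ 0)]
        · linarith [key_lin t o34 s2 hy2 (by linarith : u1 + c + d ≤ 0)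
            (by linarith : (u1 + c + d) + u4 ≤ 0) (by linarith : (u1 + c + d) + u4 + u3 ≤ 0)
            (by linarith : (u1 + c + d) + u4 + u3 + u2 ≤ 0)]
    · have m3 : max (max y1 y2) (max y3 y4) = y4 := by rw [m1, m2]; exact max_eq_right t
      rw [m3, m1]
      rcases le_total y1 y3 with s | s
      · linarith [key_lin o34 s o12 hy2 (by linarith : u4 + d ≤ 0)
          (by linarith : (u4 + d) + u3 ≤ 0) (by linarith : (u4 + d) + u3 + (u1 + c) ≤ 0)
          (by linarith : (u4 + d) + u3 + (u1 + c) + u2 ≤ 0)]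
      · rcases le_total y3 y2 with s2 | s2
        · linarith [key_lin t o12 s2 hy3 (by linarith : u4 + d ≤ 0)
            (by linarith : (u4 + d) + (u1 + c) ≤ 0)
            (by linarith : (u4 + d) + (u1 + c) + u2 ≤ 0)
            (by linarith : (u4 + d) + (u1 + c) + u2 + u3 ≤ 0)]
        · linarith [key_lin t s s2 hy2 (by linarith : u4 + d ≤ 0)
            (by linarith : (u4 + d) + (u1 + c) ≤ 0)
            (by linarith : (u4 + d) + (u1 + c) + u3 ≤ 0)
            (by linarith : (u4 + d) + (u1 + c) + u3 + u2 ≤ 0)]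
  · -- y1 ≤ y2, y4 ≤ y3
    have m1 : max y1 y2 = y2 := max_eq_right o12
    have m2 : max y3 y4 = y3 := max_eq_left o34
    rcases le_total y3 y2 with t | t
    · have m3 : max (max y1 y2) (max y3 y4) = y2 := by rw [m1, m2]; exact max_eq_left t
      rw [m3, m1]
      rcases le_total y3 y1 with s | s
      · linarith [key_lin o12 s o34 hy4 (by linarith : u2 + c + d ≤ 0)
          (by linarith : (u2 + c + d) + u1 ≤ 0) (by linarith : (u2 + c + d) + u1 + u3 ≤ 0)
          (by linarith : (u2 + c + d) + u1 + u3 + u4 ≤ 0)]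
      · rcases le_total y4 y1 with s2 | s2
        · linarith [key_lin t s s2 hy4 (by linarith : u2 + c + d ≤ 0)
            (by linarith : (u2 + c + d) + u3 ≤ 0) (by linarith : (u2 + c + d) + u3 + u1 ≤ 0)
            (by linarith : (u2 + c + d) + u3 + u1 + u4 ≤ 0)]
        · linarith [key_lin t o34 s2 hy1 (by linarith : u2 + c + d ≤ 0)
            (by linarith : (u2 + c + d) + u3 ≤ 0) (by linarith : (u2 + c + d) + u3 + u4 ≤ 0)
            (by linarith : (u2 + c + d) + u3 + u4 + u1 ≤ 0)]
    · have m3 : max (max y1 y2) (max y3 y4) = y3 := by rw [m1, m2]; exact max_eq_right t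
      rw [m3, m1]
      rcases le_total y2 y4 with s | s
      · linarith [key_lin o34 s o12 hy1 (by linarith : u3 + d ≤ 0)
          (by linarith : (u3 + d) + u4 ≤ 0) (by linarith : (u3 + d) + u4 + (u2 + c) ≤ 0)
          (by linarith : (u3 + d) + u4 + (u2 + c) + u1 ≤ 0)]
      · rcases le_total y4 y1 with s2 | s2
        · linarith [key_lin t o12 s2 hy4 (by linarith : u3 + d ≤ 0)
            (by linarith : (u3 + d) + (u2 + c) ≤ 0)
            (by linarith : (u3 + d) + (u2 + c) + u1 ≤ 0)
            (by linarith : (u3 + d) + (u2 + c) + u1 + u4 ≤ 0)]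
        · linarith [key_lin t s s2 hy1 (by linarith : u3 + d ≤ 0)
            (by linarith : (u3 + d) + (u2 + c) ≤ 0)
            (by linarith : (u3 + d) + (u2 + c) + u4 ≤ 0)
            (by linarith : (u3 + d) + (u2 + c) + u4 + u1 ≤ 0)]
  · -- y1 ≤ y2, y3 ≤ y4
    have m1 : max y1 y2 = y2 := max_eq_right o12
    have m2 : max y3 y4 = y4 := max_eq_right o34
    rcases le_total y4 y2 with t | t
    · have m3 : max (max y1 y2) (max y3 y4) = y2 := by rw [m1, m2]; exact max_eq_left t
      rw [m3, m1]
      rcases le_total y4 y1 with s | s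
      · linarith [key_lin o12 s o34 hy3 (by linarith : u2 + c + d ≤ 0)
          (by linarith : (u2 + c + d) + u1 ≤ 0) (by linarith : (u2 + c + d) + u1 + u4 ≤ 0)
          (by linarith : (u2 + c + d) + u1 + u4 + u3 ≤ 0)]
      · rcases le_total y3 y1 with s2 | s2
        · linarith [key_lin t s s2 hy3 (by linarith : u2 + c + d ≤ 0)
            (by linarith : (u2 + c + d) + u4 ≤ 0) (by linarith : (u2 + c + d) + u4 + u1 ≤ 0)
            (by linarith : (u2 + c + d) + u4 + u1 + u3 ≤ 0)]
        · linarith [key_lin t o34 s2 hy1 (by linarith : u2 + c + d ≤ 0)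
            (by linarith : (u2 + c + d) + u4 ≤ 0) (by linarith : (u2 + c + d) + u4 + u3 ≤ 0)
            (by linarith : (u2 + c + d) + u4 + u3 + u1 ≤ 0)]
    · have m3 : max (max y1 y2) (max y3 y4) = y4 := by rw [m1, m2]; exact max_eq_right t
      rw [m3, m1]
      rcases le_total y2 y3 with s | s
      · linarith [key_lin o34 s o12 hy1 (by linarith : u4 + d ≤ 0)
          (by linarith : (u4 + d) + u3 ≤ 0) (by linarith : (u4 + d) + u3 + (u2 + c) ≤ 0)
          (by linarith : (u4 + d) + u3 + (u2 + c) + u1 ≤ 0)]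
      · rcases le_total y3 y1 with s2 | s2
        · linarith [key_lin t o12 s2 hy3 (by linarith : u4 + d ≤ 0)
            (by linarith : (u4 + d) + (u2 + c) ≤ 0)
            (by linarith : (u4 + d) + (u2 + c) + u1 ≤ 0)
            (by linarith : (u4 + d) + (u2 + c) + u1 + u3 ≤ 0)]
        · linarith [key_lin t s s2 hy1 (by linarith : u4 + d ≤ 0)
            (by linarith : (u4 + d) + (u2 + c) ≤ 0)
            (by linarith : (u4 + d) + (u2 + c) + u3 ≤ 0)
            (by linarith : (u4 + d) + (u2 + c) + u3 + u1 ≤ 0)]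

lemma rpow_ub {x N K a : ℝ} (hN : 0 < N) (hK : 1 ≤ K) (h1 : N ≤ x) (h2 : x ≤ K * N) :
    x ^ a ≤ K ^ |a| * N ^ a := by
  have hx : 0 < x := lt_of_lt_of_le hN h1
  have hK0 : 0 < K := lt_of_lt_of_le one_pos hK
  rcases le_or_gt 0 a with ha | ha
  · rw [abs_of_nonneg ha]
    calc x ^ a ≤ (K * N) ^ a := Real.rpow_le_rpow hx.le h2 ha
      _ = K ^ a * N ^ a := Real.mul_rpow hK0.le hN.le
  · rw [abs_of_neg ha]
    have h3 : x ^ a ≤ N ^ a := Real.rpow_le_rpow_of_nonpos hN h1 ha.le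
    have h4 : (1:ℝ) ≤ K ^ (-a) := Real.one_le_rpow hK (by linarith)
    nlinarith [Real.rpow_pos_of_pos hN a]

lemma rpow_lb {x N K a : ℝ} (hN : 0 < N) (hK : 1 ≤ K) (h1 : N ≤ x) (h2 : x ≤ K * N) :
    K ^ (-|a|) * N ^ a ≤ x ^ a := by
  have hx : 0 < x := lt_of_lt_of_le hN h1
  have hK0 : 0 < K := lt_of_lt_of_le one_pos hK
  rcases le_or_gt 0 a with ha | ha
  · have h3 : N ^ a ≤ x ^ a := Real.rpow_le_rpow hN.le h1 ha
    have h4 : K ^ (-|a|) ≤ 1 := Real.rpow_le_one_of_one_le_of_nonpos hK (by simp [abs_nonneg])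
    nlinarith [Real.rpow_pos_of_pos hN a]
  · rw [abs_of_neg ha, neg_neg]
    calc K ^ a * N ^ a = (K * N) ^ a := (Real.mul_rpow hK0.le hN.le).symm
      _ ≤ x ^ a := Real.rpow_le_rpow_of_nonpos hx h2 ha.le

end

lemma log_max {a b : ℝ} (ha : 0 < a) (hb : 0 < b) :
    Real.log (max a b) = max (Real.log a) (Real.log b) := by
  rcases le_total a b with h | h
  · rw [max_eq_right h, max_eq_right ((Real.log_le_log_iff ha hb).2 h)]
  · rw [max_eq_left h, max_eq_left ((Real.log_le_log_iff hb ha).2 h)]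

lemma claimB {n1 n2 n3 n4 u1 u2 u3 u4 c d : ℝ}
    (hn1 : 1 ≤ n1) (hn2 : 1 ≤ n2) (hn3 : 1 ≤ n3) (hn4 : 1 ≤ n4)
    (h1 : u1 + c + d ≤ 0) (h2 : u2 + c + d ≤ 0) (h3 : u3 + d ≤ 0) (h4 : u4 + d ≤ 0)
    (h12 : u1 + u2 + c + d ≤ 0) (h13 : u1 + u3 + c + d ≤ 0) (h14 : u1 + u4 + c + d ≤ 0)
    (h23 : u2 + u3 + c + d ≤ 0) (h24 : u2 + u4 + c + d ≤ 0) (h34 : u3 + u4 + d ≤ 0)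
    (h123 : u1 + u2 + u3 + c + d ≤ 0) (h124 : u1 + u2 + u4 + c + d ≤ 0)
    (h134 : u1 + u3 + u4 + c + d ≤ 0) (h234 : u2 + u3 + u4 + c + d ≤ 0)
    (h1234 : u1 + u2 + u3 + u4 + c + d ≤ 0) :
    n1 ^ u1 * n2 ^ u2 * n3 ^ u3 * n4 ^ u4 * (max n1 n2) ^ c
      * (max (max n1 n2) (max n3 n4)) ^ d ≤ 1 := by
  have p1 : (0:ℝ) < n1 := lt_of_lt_of_le one_pos hn1
  have p2 : (0:ℝ) < n2 := lt_of_lt_of_le one_pos hn2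
  have p3 : (0:ℝ) < n3 := lt_of_lt_of_le one_pos hn3
  have p4 : (0:ℝ) < n4 := lt_of_lt_of_le one_pos hn4
  have p12 : (0:ℝ) < max n1 n2 := lt_of_lt_of_le p1 (le_max_left _ _)
  have p34 : (0:ℝ) < max n3 n4 := lt_of_lt_of_le p3 (le_max_left _ _)
  have pM : (0:ℝ) < max (max n1 n2) (max n3 n4) := lt_of_lt_of_le p12 (le_max_left _ _)
  rw [Real.rpow_def_of_pos p1, Real.rpow_def_of_pos p2, Real.rpow_def_of_pos p3,
      Real.rpow_def_of_pos p4, Real.rpow_def_of_pos p12, Real.rpow_def_of_pos pM,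
      ← Real.exp_add, ← Real.exp_add, ← Real.exp_add, ← Real.exp_add, ← Real.exp_add,
      Real.exp_le_one_iff, log_max p12 p34, log_max p1 p2, log_max p3 p4]
  have := linC (u1 := u1) (u2 := u2) (u3 := u3) (u4 := u4) (c := c) (d := d)
    (Real.log_nonneg hn1) (Real.log_nonneg hn2) (Real.log_nonneg hn3) (Real.log_nonneg hn4)
    h1 h2 h3 h4 h12 h13 h14 h23 h24 h34 h123 h124 h134 h234 h1234
  linarith

lemma f_pointwise {a1 a2 a3 a4 c b ε n1 n2 n3 n4 : ℝ}
    (hn1 : 1 ≤ n1) (hn2 : 1 ≤ n2) (hn3 : 1 ≤ n3) (hn4 : 1 ≤ n4)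
    (h1 : (a1+1+ε) + c + -b ≤ 0) (h2 : (a2+1+ε) + c + -b ≤ 0)
    (h3 : (a3+1+ε) + -b ≤ 0) (h4 : (a4+1+ε) + -b ≤ 0)
    (h12 : (a1+1+ε) + (a2+1+ε) + c + -b ≤ 0) (h13 : (a1+1+ε) + (a3+1+ε) + c + -b ≤ 0)
    (h14 : (a1+1+ε) + (a4+1+ε) + c + -b ≤ 0) (h23 : (a2+1+ε) + (a3+1+ε) + c + -b ≤ 0)
    (h24 : (a2+1+ε) + (a4+1+ε) + c + -b ≤ 0) (h34 : (a3+1+ε) + (a4+1+ε) + -b ≤ 0)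
    (h123 : (a1+1+ε) + (a2+1+ε) + (a3+1+ε) + c + -b ≤ 0)
    (h124 : (a1+1+ε) + (a2+1+ε) + (a4+1+ε) + c + -b ≤ 0)
    (h134 : (a1+1+ε) + (a3+1+ε) + (a4+1+ε) + c + -b ≤ 0)
    (h234 : (a2+1+ε) + (a3+1+ε) + (a4+1+ε) + c + -b ≤ 0)
    (h1234 : (a1+1+ε) + (a2+1+ε) + (a3+1+ε) + (a4+1+ε) + c + -b ≤ 0) :
    n1 ^ a1 * n2 ^ a2 * n3 ^ a3 * n4 ^ a4 * (n1 + n2) ^ c / (n1 + n2 + n3 + n4) ^ b ≤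
      (2:ℝ) ^ |c| * 4 ^ |b| *
        (n1 ^ (-(1+ε)) * (n2 ^ (-(1+ε)) * (n3 ^ (-(1+ε)) * n4 ^ (-(1+ε))))) := by
  have p1 : (0:ℝ) < n1 := lt_of_lt_of_le one_pos hn1
  have p2 : (0:ℝ) < n2 := lt_of_lt_of_le one_pos hn2
  have p3 : (0:ℝ) < n3 := lt_of_lt_of_le one_pos hn3
  have p4 : (0:ℝ) < n4 := lt_of_lt_of_le one_pos hn4
  have p12 : (0:ℝ) < max n1 n2 := lt_of_lt_of_le p1 (le_max_left _ _)
  have pM : (0:ℝ) < max (max n1 n2) (max n3 n4) := lt_of_lt_of_le p12 (le_max_left _ _)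
  have ps : (0:ℝ) < n1 + n2 + n3 + n4 := by linarith
  set M12 := max n1 n2 with hM12
  set M := max (max n1 n2) (max n3 n4) with hM
  have hb1 : M12 ≤ n1 + n2 := max_le (by linarith) (by linarith)
  have hb2 : n1 + n2 ≤ 2 * M12 := by
    have := le_max_left n1 n2; have := le_max_right n1 n2; linarith
  have hMn1 : n1 ≤ M := le_trans (le_max_left n1 n2) (le_max_left _ _)
  have hMn2 : n2 ≤ M := le_trans (le_max_right n1 n2) (le_max_left _ _)
  have hMn3 : n3 ≤ M := le_trans (le_max_left n3 n4) (le_max_right _ _)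
  have hMn4 : n4 ≤ M := le_trans (le_max_right n3 n4) (le_max_right _ _)
  have hb3 : M ≤ n1 + n2 + n3 + n4 :=
    max_le (max_le (by linarith) (by linarith)) (max_le (by linarith) (by linarith))
  have hb4 : n1 + n2 + n3 + n4 ≤ 4 * M := by linarith
  have i12 : (n1 + n2) ^ c ≤ 2 ^ |c| * M12 ^ c := rpow_ub p12 (by norm_num) hb1 hb2
  have iS : (n1 + n2 + n3 + n4) ^ (-b) ≤ 4 ^ |b| * M ^ (-b) := by
    have := rpow_ub (a := -b) pM (by norm_num : (1:ℝ) ≤ 4) hb3 hb4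
    rwa [abs_neg] at this
  have CB := claimB (u1 := a1+1+ε) (u2 := a2+1+ε) (u3 := a3+1+ε) (u4 := a4+1+ε)
    (c := c) (d := -b) hn1 hn2 hn3 hn4 h1 h2 h3 h4 h12 h13 h14 h23 h24 h34
    h123 h124 h134 h234 h1234
  have sp1 : n1 ^ a1 = n1 ^ (a1+1+ε) * n1 ^ (-(1+ε)) := by
    rw [← Real.rpow_add p1]; congr 1; ring
  have sp2 : n2 ^ a2 = n2 ^ (a2+1+ε) * n2 ^ (-(1+ε)) := by
    rw [← Real.rpow_add p2]; congr 1; ring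
  have sp3 : n3 ^ a3 = n3 ^ (a3+1+ε) * n3 ^ (-(1+ε)) := by
    rw [← Real.rpow_add p3]; congr 1; ring
  have sp4 : n4 ^ a4 = n4 ^ (a4+1+ε) * n4 ^ (-(1+ε)) := by
    rw [← Real.rpow_add p4]; congr 1; ring
  have nn : ∀ x e : ℝ, 0 ≤ x → (0:ℝ) ≤ x ^ e := fun x e hx => Real.rpow_nonneg hx e
  calc n1 ^ a1 * n2 ^ a2 * n3 ^ a3 * n4 ^ a4 * (n1 + n2) ^ c / (n1 + n2 + n3 + n4) ^ b
      = n1 ^ a1 * n2 ^ a2 * n3 ^ a3 * n4 ^ a4 * (n1 + n2) ^ c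
        * (n1 + n2 + n3 + n4) ^ (-b) := by
        rw [Real.rpow_neg ps.le, div_eq_mul_inv]
    _ ≤ n1 ^ a1 * n2 ^ a2 * n3 ^ a3 * n4 ^ a4 * (2 ^ |c| * M12 ^ c)
        * (4 ^ |b| * M ^ (-b)) := by
        apply mul_le_mul _ iS (nn _ _ ps.le) _
        · apply mul_le_mul_of_nonneg_left i12
          positivity
        · positivity
    _ = 2 ^ |c| * 4 ^ |b| *
        ((n1 ^ (a1+1+ε) * n2 ^ (a2+1+ε) * n3 ^ (a3+1+ε) * n4 ^ (a4+1+ε) * M12 ^ c * M ^ (-b))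
          * (n1 ^ (-(1+ε)) * (n2 ^ (-(1+ε)) * (n3 ^ (-(1+ε)) * n4 ^ (-(1+ε)))))) := by
        rw [sp1, sp2, sp3, sp4]; ring
    _ ≤ 2 ^ |c| * 4 ^ |b| *
        (1 * (n1 ^ (-(1+ε)) * (n2 ^ (-(1+ε)) * (n3 ^ (-(1+ε)) * n4 ^ (-(1+ε)))))) := by
        apply mul_le_mul_of_nonneg_left _ (by positivity)
        apply mul_le_mul_of_nonneg_right CB
        have := nn n1 (-(1+ε)) p1.le; have := nn n2 (-(1+ε)) p2.le
        have := nn n3 (-(1+ε)) p3.le; have := nn n4 (-(1+ε)) p4.le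
        positivity
    _ = 2 ^ |c| * 4 ^ |b| *
        (n1 ^ (-(1+ε)) * (n2 ^ (-(1+ε)) * (n3 ^ (-(1+ε)) * n4 ^ (-(1+ε))))) := by ring


lemma summable_pnat_rpow {c : ℝ} (hc : c < -1) :
    Summable (fun n : ℕ+ => ((n : ℕ) : ℝ) ^ c) := by
  have h := Real.summable_nat_rpow.2 hc
  exact h.comp_injective PNat.coe_injective

def e4 : (Fin 4 → ℕ+) ≃ (ℕ+ × ℕ+ × ℕ+ × ℕ+) where
  toFun i := (i 0, i 1, i 2, i 3)
  invFun p := ![p.1, p.2.1, p.2.2.1, p.2.2.2]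
  left_inv i := by funext j; fin_cases j <;> rfl
  right_inv p := rfl

lemma summable_g {c : ℝ} (hc : c < -1) :
    Summable (fun i : Fin 4 → ℕ+ =>
      ((i 0 : ℕ) : ℝ) ^ c * (((i 1 : ℕ) : ℝ) ^ c * (((i 2 : ℕ) : ℝ) ^ c * ((i 3 : ℕ) : ℝ) ^ c))) := by
  have S := summable_pnat_rpow hc
  have nn : 0 ≤ fun n : ℕ+ => ((n : ℕ) : ℝ) ^ c := fun n => Real.rpow_nonneg (by positivity) c
  have S2 := S.mul_of_nonneg S nn nn
  have nn2 : 0 ≤ fun p : ℕ+ × ℕ+ => ((p.1 : ℕ) : ℝ) ^ c * ((p.2 : ℕ) : ℝ) ^ c :=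
    fun p => mul_nonneg (nn p.1) (nn p.2)
  have S3 := S.mul_of_nonneg S2 nn nn2
  have nn3 : 0 ≤ fun p : ℕ+ × ℕ+ × ℕ+ =>
      ((p.1 : ℕ) : ℝ) ^ c * (((p.2.1 : ℕ) : ℝ) ^ c * ((p.2.2 : ℕ) : ℝ) ^ c) :=
    fun p => mul_nonneg (nn p.1) (mul_nonneg (nn p.2.1) (nn p.2.2))
  have S4 := S.mul_of_nonneg S3 nn nn3
  exact (Equiv.summable_iff e4).2 S4


lemma factor_lb {N n a : ℝ} {P : Prop} [Decidable P] (hN : 1 ≤ N)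
    (hP : P → N ≤ n ∧ n ≤ 2 * N) (hnP : ¬P → n = 1) :
    (2:ℝ) ^ (-|a|) * N ^ (if P then a else 0) ≤ n ^ a := by
  split_ifs with h
  · obtain ⟨l, r⟩ := hP h
    exact rpow_lb (by linarith) (by norm_num) l r
  · rw [hnP h, Real.one_rpow, Real.rpow_zero, mul_one]
    exact Real.rpow_le_one_of_one_le_of_nonpos (by norm_num) (neg_nonpos.2 (abs_nonneg a))

lemma pair_lb {N x c : ℝ} {P : Prop} [Decidable P] (hN : 1 ≤ N)
    (hP : P → N ≤ x ∧ x ≤ 4 * N) (hnP : ¬P → x = 2) :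
    (4:ℝ) ^ (-|c|) * N ^ (if P then c else 0) ≤ x ^ c := by
  split_ifs with h
  · obtain ⟨l, r⟩ := hP h
    exact rpow_lb (by linarith) (by norm_num) l r
  · rw [hnP h, Real.rpow_zero, mul_one]
    have := rpow_lb (x := 2) (N := 1) (K := 4) (a := c) one_pos (by norm_num) (by norm_num)
      (by norm_num)
    rwa [Real.one_rpow, mul_one] at this

lemma nat_log_unique {x m k : ℕ} (h1 : 2^m ≤ x) (h2 : x < 2^(m+1)) (h3 : 2^k ≤ x)
    (h4 : x < 2^(k+1)) : m = k := by
  by_contra hne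
  rcases Nat.lt_or_ge m k with h | h
  · have : 2^(m+1) ≤ 2^k := Nat.pow_le_pow_right (by norm_num) (by omega)
    omega
  · have : 2^(k+1) ≤ 2^m := Nat.pow_le_pow_right (by norm_num) (by omega)
    omega

/-- Convergence criterion for
`∑_{i ∈ ℕ₊⁴} i₁^{a₁} i₂^{a₂} i₃^{a₃} i₄^{a₄} (i₁+i₂)^{a₁₂} / (i₁+i₂+i₃+i₄)^b`. -/
theorem zeta_series_four_vars_pair_iff (a₁ a₂ a₃ a₄ a₁₂ b : ℝ) :
    Summable (fun i : Fin 4 → ℕ+ =>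
        ((i 0 : ℕ) : ℝ) ^ a₁ * ((i 1 : ℕ) : ℝ) ^ a₂ * ((i 2 : ℕ) : ℝ) ^ a₃ *
          ((i 3 : ℕ) : ℝ) ^ a₄ *
          (((i 0 : ℕ) : ℝ) + ((i 1 : ℕ) : ℝ)) ^ a₁₂ /
          (((i 0 : ℕ) : ℝ) + ((i 1 : ℕ) : ℝ) + ((i 2 : ℕ) : ℝ) + ((i 3 : ℕ) : ℝ)) ^ b) ↔
      ∀ J : Finset (Fin 4), J.Nonempty →
        (J.card : ℝ) + ∑ j ∈ J, ![a₁, a₂, a₃, a₄] j +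
          (if (0 : Fin 4) ∈ J ∨ (1 : Fin 4) ∈ J then a₁₂ else 0) < b := by
  constructor
  · intro hf J hJne
    by_contra hb
    push_neg at hb
    classical
    obtain ⟨j0, hj0⟩ := hJne
    set S : ℕ → Finset (Fin 4 → ℕ+) := fun m =>
      Fintype.piFinset (fun j => if j ∈ J then Finset.Ico ((2:ℕ+)^m) ((2:ℕ+)^(m+1)) else {1})
      with hSdef
    have hc0pos : (0:ℝ) < (2:ℝ) ^ (-|a₁|) * 2 ^ (-|a₂|) * 2 ^ (-|a₃|) * 2 ^ (-|a₄|) * 4 ^ (-|a₁₂|) * 8 ^ (-|b|) := by positivity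
    have hblock : ∀ m : ℕ, (2:ℝ) ^ (-|a₁|) * 2 ^ (-|a₂|) * 2 ^ (-|a₃|) * 2 ^ (-|a₄|) * 4 ^ (-|a₁₂|) * 8 ^ (-|b|) ≤ ∑ i ∈ S m, ((i 0 : ℕ) : ℝ) ^ a₁ * ((i 1 : ℕ) : ℝ) ^ a₂ * ((i 2 : ℕ) : ℝ) ^ a₃ * ((i 3 : ℕ) : ℝ) ^ a₄ * (((i 0 : ℕ) : ℝ) + ((i 1 : ℕ) : ℝ)) ^ a₁₂ / (((i 0 : ℕ) : ℝ) + ((i 1 : ℕ) : ℝ) + ((i 2 : ℕ) : ℝ) + ((i 3 : ℕ) : ℝ)) ^ b := by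
      intro m
      have hN1 : (1:ℝ) ≤ (2:ℝ) ^ m := one_le_pow₀ (by norm_num)
      have hNpos : (0:ℝ) < (2:ℝ) ^ m := by positivity
      have hterm : ∀ i ∈ S m, ((2:ℝ) ^ (-|a₁|) * 2 ^ (-|a₂|) * 2 ^ (-|a₃|) * 2 ^ (-|a₄|) * 4 ^ (-|a₁₂|) * 8 ^ (-|b|)) * ((2:ℝ) ^ m) ^ (∑ j ∈ J, ![a₁, a₂, a₃, a₄] j + (if (0 : Fin 4) ∈ J ∨ (1 : Fin 4) ∈ J then a₁₂ else 0) - b) ≤ ((i 0 : ℕ) : ℝ) ^ a₁ * ((i 1 : ℕ) : ℝ) ^ a₂ * ((i 2 : ℕ) : ℝ) ^ a₃ * ((i 3 : ℕ) : ℝ) ^ a₄ * (((i 0 : ℕ) : ℝ) + ((i 1 : ℕ) : ℝ)) ^ a₁₂ / (((i 0 : ℕ) : ℝ) + ((i 1 : ℕ) : ℝ) + ((i 2 : ℕ) : ℝ) + ((i 3 : ℕ) : ℝ)) ^ b := by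
        intro i hi
        have hmem := Fintype.mem_piFinset.1 hi
        have hcase : ∀ j : Fin 4, (j ∈ J → (2:ℝ)^m ≤ ((i j : ℕ) : ℝ) ∧ ((i j : ℕ) : ℝ) ≤ 2 * (2:ℝ)^m)
            ∧ (j ∉ J → ((i j : ℕ) : ℝ) = 1) := by
          intro j
          constructor
          · intro hjJ
            have hj := hmem j
            rw [if_pos hjJ, Finset.mem_Ico] at hj
            have l' : (2:ℕ)^m ≤ (i j : ℕ) := by exact_mod_cast hj.1
            have r' : (i j : ℕ) < 2^(m+1) := by exact_mod_cast hj.2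
            constructor
            · exact_mod_cast l'
            · have hr : ((i j : ℕ) : ℝ) < (2:ℝ)^(m+1) := by exact_mod_cast r'
              rw [pow_succ] at hr
              linarith
          · intro hjJ
            have hj := hmem j
            rw [if_neg hjJ, Finset.mem_singleton] at hj
            rw [hj]
            norm_num
        have hone : ∀ j : Fin 4, (1:ℝ) ≤ ((i j : ℕ) : ℝ) := fun j => by exact_mod_cast (i j).one_le
        have hub : ∀ j : Fin 4, ((i j : ℕ) : ℝ) ≤ 2 * (2:ℝ)^m := by
          intro j
          by_cases hjm : j ∈ J
          · exact ((hcase j).1 hjm).2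
          · rw [(hcase j).2 hjm]; linarith
        have F1 := factor_lb (a := a₁) (P := (0:Fin 4) ∈ J) hN1 ((hcase 0).1) ((hcase 0).2)
        have F2 := factor_lb (a := a₂) (P := (1:Fin 4) ∈ J) hN1 ((hcase 1).1) ((hcase 1).2)
        have F3 := factor_lb (a := a₃) (P := (2:Fin 4) ∈ J) hN1 ((hcase 2).1) ((hcase 2).2)
        have F4 := factor_lb (a := a₄) (P := (3:Fin 4) ∈ J) hN1 ((hcase 3).1) ((hcase 3).2)
        have FP := pair_lb (c := a₁₂) (P := (0:Fin 4) ∈ J ∨ (1:Fin 4) ∈ J)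
          (N := (2:ℝ)^m) (x := ((i 0 : ℕ) : ℝ) + ((i 1 : ℕ) : ℝ)) hN1
          (fun hP => by
            constructor
            · rcases hP with h0 | h0
              · have := ((hcase 0).1 h0).1; linarith [hone 1]
              · have := ((hcase 1).1 h0).1; linarith [hone 0]
            · linarith [hub 0, hub 1])
          (fun hP => by
            push_neg at hP
            rw [(hcase 0).2 hP.1, (hcase 1).2 hP.2]; norm_num)
        have hslb : (2:ℝ)^m ≤ ((i 0 : ℕ) : ℝ) + ((i 1 : ℕ) : ℝ) + ((i 2 : ℕ) : ℝ) + ((i 3 : ℕ) : ℝ) := by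
          have hsum4 : ((i 0 : ℕ) : ℝ) + ((i 1 : ℕ) : ℝ) + ((i 2 : ℕ) : ℝ) + ((i 3 : ℕ) : ℝ)
              = ∑ j : Fin 4, ((i j : ℕ) : ℝ) := (Fin.sum_univ_four (fun j => ((i j : ℕ) : ℝ))).symm
          rw [hsum4]
          calc (2:ℝ)^m ≤ ((i j0 : ℕ) : ℝ) := ((hcase j0).1 hj0).1
            _ ≤ ∑ j : Fin 4, ((i j : ℕ) : ℝ) :=
                Finset.single_le_sum (f := fun j => ((i j : ℕ) : ℝ))
                  (fun j _ => by positivity) (Finset.mem_univ j0)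
        have hsub : ((i 0 : ℕ) : ℝ) + ((i 1 : ℕ) : ℝ) + ((i 2 : ℕ) : ℝ) + ((i 3 : ℕ) : ℝ) ≤ 8 * (2:ℝ)^m := by
          linarith [hub 0, hub 1, hub 2, hub 3]
        have FS := rpow_lb (x := ((i 0 : ℕ) : ℝ) + ((i 1 : ℕ) : ℝ) + ((i 2 : ℕ) : ℝ) + ((i 3 : ℕ) : ℝ))
          (N := (2:ℝ)^m) (K := 8) (a := -b) hNpos (by norm_num) hslb hsub
        rw [abs_neg] at FS
        have v0 : ![a₁, a₂, a₃, a₄] (0 : Fin 4) = a₁ := rfl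
        have v1 : ![a₁, a₂, a₃, a₄] (1 : Fin 4) = a₂ := rfl
        have v2 : ![a₁, a₂, a₃, a₄] (2 : Fin 4) = a₃ := rfl
        have v3 : ![a₁, a₂, a₃, a₄] (3 : Fin 4) = a₄ := rfl
        have hEsum : (if (0 : Fin 4) ∈ J then a₁ else 0) + (if (1 : Fin 4) ∈ J then a₂ else 0) + (if (2 : Fin 4) ∈ J then a₃ else 0) + (if (3 : Fin 4) ∈ J then a₄ else 0) = ∑ j ∈ J, ![a₁, a₂, a₃, a₄] j := by
          have e := Finset.sum_ite_mem Finset.univ J (fun j => ![a₁, a₂, a₃, a₄] j)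
          rw [Finset.univ_inter] at e
          rw [← e, Fin.sum_univ_four, v0, v1, v2, v3]
        have key : ((2:ℝ) ^ (-|a₁|) * ((2:ℝ) ^ m) ^ (if (0 : Fin 4) ∈ J then a₁ else 0)) * ((2:ℝ) ^ (-|a₂|) * ((2:ℝ) ^ m) ^ (if (1 : Fin 4) ∈ J then a₂ else 0))
            * ((2:ℝ) ^ (-|a₃|) * ((2:ℝ) ^ m) ^ (if (2 : Fin 4) ∈ J then a₃ else 0)) * ((2:ℝ) ^ (-|a₄|) * ((2:ℝ) ^ m) ^ (if (3 : Fin 4) ∈ J then a₄ else 0))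
            * ((4:ℝ) ^ (-|a₁₂|) * ((2:ℝ) ^ m) ^ (if (0 : Fin 4) ∈ J ∨ (1 : Fin 4) ∈ J then a₁₂ else 0)) * ((8:ℝ) ^ (-|b|) * ((2:ℝ) ^ m) ^ (-b))
            = ((2:ℝ) ^ (-|a₁|) * 2 ^ (-|a₂|) * 2 ^ (-|a₃|) * 2 ^ (-|a₄|) * 4 ^ (-|a₁₂|) * 8 ^ (-|b|)) * ((2:ℝ) ^ m) ^ (∑ j ∈ J, ![a₁, a₂, a₃, a₄] j + (if (0 : Fin 4) ∈ J ∨ (1 : Fin 4) ∈ J then a₁₂ else 0) - b) := by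
          calc ((2:ℝ) ^ (-|a₁|) * ((2:ℝ) ^ m) ^ (if (0 : Fin 4) ∈ J then a₁ else 0)) * ((2:ℝ) ^ (-|a₂|) * ((2:ℝ) ^ m) ^ (if (1 : Fin 4) ∈ J then a₂ else 0))
              * ((2:ℝ) ^ (-|a₃|) * ((2:ℝ) ^ m) ^ (if (2 : Fin 4) ∈ J then a₃ else 0)) * ((2:ℝ) ^ (-|a₄|) * ((2:ℝ) ^ m) ^ (if (3 : Fin 4) ∈ J then a₄ else 0))
              * ((4:ℝ) ^ (-|a₁₂|) * ((2:ℝ) ^ m) ^ (if (0 : Fin 4) ∈ J ∨ (1 : Fin 4) ∈ J then a₁₂ else 0)) * ((8:ℝ) ^ (-|b|) * ((2:ℝ) ^ m) ^ (-b))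
              = ((2:ℝ) ^ (-|a₁|) * 2 ^ (-|a₂|) * 2 ^ (-|a₃|) * 2 ^ (-|a₄|) * 4 ^ (-|a₁₂|) * 8 ^ (-|b|)) * (((2:ℝ) ^ m) ^ (if (0 : Fin 4) ∈ J then a₁ else 0) * ((2:ℝ) ^ m) ^ (if (1 : Fin 4) ∈ J then a₂ else 0) * ((2:ℝ) ^ m) ^ (if (2 : Fin 4) ∈ J then a₃ else 0) * ((2:ℝ) ^ m) ^ (if (3 : Fin 4) ∈ J then a₄ else 0)
                * ((2:ℝ) ^ m) ^ (if (0 : Fin 4) ∈ J ∨ (1 : Fin 4) ∈ J then a₁₂ else 0) * ((2:ℝ) ^ m) ^ (-b)) := by ring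
            _ = ((2:ℝ) ^ (-|a₁|) * 2 ^ (-|a₂|) * 2 ^ (-|a₃|) * 2 ^ (-|a₄|) * 4 ^ (-|a₁₂|) * 8 ^ (-|b|)) * ((2:ℝ) ^ m) ^ (∑ j ∈ J, ![a₁, a₂, a₃, a₄] j + (if (0 : Fin 4) ∈ J ∨ (1 : Fin 4) ∈ J then a₁₂ else 0) - b) := by
                simp only [← Real.rpow_add hNpos]
                congr 2
                rw [← hEsum]
                ring
        rw [div_eq_mul_inv, ← Real.rpow_neg (by positivity)]
        rw [← key]
        apply mul_le_mul (mul_le_mul (mul_le_mul (mul_le_mul (mul_le_mul F1 F2 (by positivity)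
          (by positivity)) F3 (by positivity) (by positivity)) F4 (by positivity) (by positivity))
          FP (by positivity) (by positivity)) FS (by positivity) (by positivity)
      have hsum := Finset.card_nsmul_le_sum (S m) _ _ hterm
      have hcard : (S m).card = (2^m)^(J.card) := by
        rw [hSdef]
        rw [Fintype.card_piFinset]
        have hc : ∀ j : Fin 4, ((if j ∈ J then Finset.Ico ((2:ℕ+)^m) ((2:ℕ+)^(m+1)) else {1}).card)
            = if j ∈ J then 2^m else 1 := by
          intro j
          split_ifs with hjm
          · rw [PNat.card_Ico]
            have c1 : (((2:ℕ+)^(m+1) : ℕ+) : ℕ) = 2^(m+1) := by exact_mod_cast rfl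
            have c2 : (((2:ℕ+)^m : ℕ+) : ℕ) = 2^m := by exact_mod_cast rfl
            rw [c1, c2, pow_succ]
            omega
          · simp
        rw [Finset.prod_congr rfl (fun j _ => hc j), Finset.prod_ite_mem, Finset.univ_inter,
          Finset.prod_const]
      have hcardR : (((S m).card : ℕ) : ℝ) = ((2:ℝ) ^ m) ^ ((J.card : ℕ) : ℝ) := by
        rw [hcard, Real.rpow_natCast]
        push_cast
        ring
      calc ((2:ℝ) ^ (-|a₁|) * 2 ^ (-|a₂|) * 2 ^ (-|a₃|) * 2 ^ (-|a₄|) * 4 ^ (-|a₁₂|) * 8 ^ (-|b|)) = ((2:ℝ) ^ (-|a₁|) * 2 ^ (-|a₂|) * 2 ^ (-|a₃|) * 2 ^ (-|a₄|) * 4 ^ (-|a₁₂|) * 8 ^ (-|b|)) * 1 := (mul_one _).symm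
        _ ≤ ((2:ℝ) ^ (-|a₁|) * 2 ^ (-|a₂|) * 2 ^ (-|a₃|) * 2 ^ (-|a₄|) * 4 ^ (-|a₁₂|) * 8 ^ (-|b|)) * ((2:ℝ) ^ m) ^ (((J.card : ℕ) : ℝ) + (∑ j ∈ J, ![a₁, a₂, a₃, a₄] j + (if (0 : Fin 4) ∈ J ∨ (1 : Fin 4) ∈ J then a₁₂ else 0) - b)) := by
            apply mul_le_mul_of_nonneg_left _ hc0pos.le
            calc (1:ℝ) = ((2:ℝ) ^ m) ^ (0:ℝ) := (Real.rpow_zero _).symm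
              _ ≤ ((2:ℝ) ^ m) ^ (((J.card : ℕ) : ℝ) + (∑ j ∈ J, ![a₁, a₂, a₃, a₄] j + (if (0 : Fin 4) ∈ J ∨ (1 : Fin 4) ∈ J then a₁₂ else 0) - b)) :=
                  Real.rpow_le_rpow_of_exponent_le hN1 (by linarith [hb])
        _ = (S m).card • (((2:ℝ) ^ (-|a₁|) * 2 ^ (-|a₂|) * 2 ^ (-|a₃|) * 2 ^ (-|a₄|) * 4 ^ (-|a₁₂|) * 8 ^ (-|b|)) * ((2:ℝ) ^ m) ^ (∑ j ∈ J, ![a₁, a₂, a₃, a₄] j + (if (0 : Fin 4) ∈ J ∨ (1 : Fin 4) ∈ J then a₁₂ else 0) - b)) := by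
            rw [nsmul_eq_mul, hcardR, Real.rpow_add hNpos]
            ring
        _ ≤ ∑ i ∈ S m, ((i 0 : ℕ) : ℝ) ^ a₁ * ((i 1 : ℕ) : ℝ) ^ a₂ * ((i 2 : ℕ) : ℝ) ^ a₃ * ((i 3 : ℕ) : ℝ) ^ a₄ * (((i 0 : ℕ) : ℝ) + ((i 1 : ℕ) : ℝ)) ^ a₁₂ / (((i 0 : ℕ) : ℝ) + ((i 1 : ℕ) : ℝ) + ((i 2 : ℕ) : ℝ) + ((i 3 : ℕ) : ℝ)) ^ b := hsum
    have hdisj : ∀ m m' : ℕ, m ≠ m' → Disjoint (S m) (S m') := by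
      intro m m' hne
      rw [Finset.disjoint_left]
      intro i him him'
      have h1 := Fintype.mem_piFinset.1 him j0
      have h2 := Fintype.mem_piFinset.1 him' j0
      rw [if_pos hj0, Finset.mem_Ico] at h1 h2
      have l1 : 2^m ≤ (i j0 : ℕ) := by exact_mod_cast h1.1
      have r1 : (i j0 : ℕ) < 2^(m+1) := by exact_mod_cast h1.2
      have l2 : 2^m' ≤ (i j0 : ℕ) := by exact_mod_cast h2.1
      have r2 : (i j0 : ℕ) < 2^(m'+1) := by exact_mod_cast h2.2
      exact hne (nat_log_unique l1 r1 l2 r2)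
    have htotal : ∀ M : ℕ, (M : ℝ) * ((2:ℝ) ^ (-|a₁|) * 2 ^ (-|a₂|) * 2 ^ (-|a₃|) * 2 ^ (-|a₄|) * 4 ^ (-|a₁₂|) * 8 ^ (-|b|)) ≤ ∑' i : Fin 4 → ℕ+, ((i 0 : ℕ) : ℝ) ^ a₁ * ((i 1 : ℕ) : ℝ) ^ a₂ * ((i 2 : ℕ) : ℝ) ^ a₃ * ((i 3 : ℕ) : ℝ) ^ a₄ * (((i 0 : ℕ) : ℝ) + ((i 1 : ℕ) : ℝ)) ^ a₁₂ / (((i 0 : ℕ) : ℝ) + ((i 1 : ℕ) : ℝ) + ((i 2 : ℕ) : ℝ) + ((i 3 : ℕ) : ℝ)) ^ b := by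
      intro M
      have hd : (↑(Finset.range M) : Set ℕ).PairwiseDisjoint S := fun x _ y _ hxy => hdisj x y hxy
      have e1 : ∑ i ∈ (Finset.range M).biUnion S, ((i 0 : ℕ) : ℝ) ^ a₁ * ((i 1 : ℕ) : ℝ) ^ a₂ * ((i 2 : ℕ) : ℝ) ^ a₃ * ((i 3 : ℕ) : ℝ) ^ a₄ * (((i 0 : ℕ) : ℝ) + ((i 1 : ℕ) : ℝ)) ^ a₁₂ / (((i 0 : ℕ) : ℝ) + ((i 1 : ℕ) : ℝ) + ((i 2 : ℕ) : ℝ) + ((i 3 : ℕ) : ℝ)) ^ b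
          = ∑ m ∈ Finset.range M, ∑ i ∈ S m, ((i 0 : ℕ) : ℝ) ^ a₁ * ((i 1 : ℕ) : ℝ) ^ a₂ * ((i 2 : ℕ) : ℝ) ^ a₃ * ((i 3 : ℕ) : ℝ) ^ a₄ * (((i 0 : ℕ) : ℝ) + ((i 1 : ℕ) : ℝ)) ^ a₁₂ / (((i 0 : ℕ) : ℝ) + ((i 1 : ℕ) : ℝ) + ((i 2 : ℕ) : ℝ) + ((i 3 : ℕ) : ℝ)) ^ b := Finset.sum_biUnion hd
      have e2 : ∑ m ∈ Finset.range M, ((2:ℝ) ^ (-|a₁|) * 2 ^ (-|a₂|) * 2 ^ (-|a₃|) * 2 ^ (-|a₄|) * 4 ^ (-|a₁₂|) * 8 ^ (-|b|)) ≤ ∑ m ∈ Finset.range M, ∑ i ∈ S m, ((i 0 : ℕ) : ℝ) ^ a₁ * ((i 1 : ℕ) : ℝ) ^ a₂ * ((i 2 : ℕ) : ℝ) ^ a₃ * ((i 3 : ℕ) : ℝ) ^ a₄ * (((i 0 : ℕ) : ℝ) + ((i 1 : ℕ) : ℝ)) ^ a₁₂ / (((i 0 : ℕ) : ℝ) + ((i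 1 : ℕ) : ℝ) + ((i 2 : ℕ) : ℝ) + ((i 3 : ℕ) : ℝ)) ^ b :=
        Finset.sum_le_sum (fun m _ => hblock m)
      have e3 : ∑ i ∈ (Finset.range M).biUnion S, ((i 0 : ℕ) : ℝ) ^ a₁ * ((i 1 : ℕ) : ℝ) ^ a₂ * ((i 2 : ℕ) : ℝ) ^ a₃ * ((i 3 : ℕ) : ℝ) ^ a₄ * (((i 0 : ℕ) : ℝ) + ((i 1 : ℕ) : ℝ)) ^ a₁₂ / (((i 0 : ℕ) : ℝ) + ((i 1 : ℕ) : ℝ) + ((i 2 : ℕ) : ℝ) + ((i 3 : ℕ) : ℝ)) ^ b ≤ ∑' i : Fin 4 → ℕ+, ((i 0 : ℕ) : ℝ) ^ a₁ * ((i 1 : ℕ) : ℝ) ^ a₂ * ((i 2 : ℕ) : ℝ) ^ a₃ * ((i 3 : ℕ) : ℝ) ^ a₄ * (((i 0 : ℕ) : ℝ) + ((i 1 : ℕ) : ℝ)) ^ a₁₂ / (((i 0 : ℕ) : ℝ) + ((i 1 : ℕ) : ℝ) + ((i 2 : ℕ) : ℝ) + ((i 3 : ℕ) : ℝ)) ^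 b :=
        Summable.sum_le_tsum _ (fun i _ => by positivity) hf
      rw [Finset.sum_const, Finset.card_range, nsmul_eq_mul] at e2
      linarith
    obtain ⟨M, hM⟩ := exists_nat_gt ((∑' i : Fin 4 → ℕ+, ((i 0 : ℕ) : ℝ) ^ a₁ * ((i 1 : ℕ) : ℝ) ^ a₂ * ((i 2 : ℕ) : ℝ) ^ a₃ * ((i 3 : ℕ) : ℝ) ^ a₄ * (((i 0 : ℕ) : ℝ) + ((i 1 : ℕ) : ℝ)) ^ a₁₂ / (((i 0 : ℕ) : ℝ) + ((i 1 : ℕ) : ℝ) + ((i 2 : ℕ) : ℝ) + ((i 3 : ℕ) : ℝ)) ^ b) / ((2:ℝ) ^ (-|a₁|) * 2 ^ (-|a₂|) * 2 ^ (-|a₃|) * 2 ^ (-|a₄|) * 4 ^ (-|a₁₂|) * 8 ^ (-|b|)))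
    have hMle := htotal M
    rw [div_lt_iff₀ hc0pos] at hM
    linarith
  · intro h
    have h1 := h {0} (by norm_num)
    have h2 := h {1} (by norm_num)
    have h3 := h {2} (by norm_num)
    have h4 := h {3} (by norm_num)
    have h12 := h {0,1} (by norm_num)
    have h13 := h {0,2} (by norm_num)
    have h14 := h {0,3} (by norm_num)
    have h23 := h {1,2} (by norm_num)
    have h24 := h {1,3} (by norm_num)
    have h34 := h {2,3} (by norm_num)
    have h123 := h {0,1,2} (by norm_num)
    have h124 := h {0,1,3} (by norm_num)
    have h134 := h {0,2,3} (by norm_num)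
    have h234 := h {1,2,3} (by norm_num)
    have h1234 := h {0,1,2,3} (by norm_num)
    norm_num [Finset.sum_insert, Finset.mem_insert, Finset.mem_singleton,
      Finset.card_insert_of_notMem, Matrix.cons_val_two, Matrix.cons_val_three, Matrix.head_cons, Matrix.tail_cons, show ((0:Fin 4) = 1) = False by decide, show ((0:Fin 4) = 2) = False by decide, show ((0:Fin 4) = 3) = False by decide, show ((1:Fin 4) = 0) = False by decide, show ((1:Fin 4) = 2) = False by decide, show ((1:Fin 4) = 3) = False by decide, show ((2:Fin 4) = 0) = False by decide, show ((2:Fin 4) = 1) = False by decide, show ((2:Fin 4) = 3) = False by decide, show ((3:Fin 4) = 0) = False by decide, show ((3:Fin 4) = 1) = False by decide, show ((3:Fin 4) = 2) = False by decide] at h1 h2 h3 h4 h12 h13 h14 h23 h24 h34 h123 h124 h134 h234 h1234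
    obtain ⟨ε, hε0, q1, q2, q3, q4, q12, q13, q14, q23, q24, q34, q123, q124, q134, q234, q1234⟩ :
        ∃ ε : ℝ, 0 < ε ∧ 1 + a₁ + a₁₂ + 4*ε ≤ b ∧ 1 + a₂ + a₁₂ + 4*ε ≤ b ∧ 1 + a₃ + 4*ε ≤ b ∧ 1 + a₄ + 4*ε ≤ b ∧ 2 + a₁ + a₂ + a₁₂ + 4*ε ≤ b ∧ 2 + a₁ + a₃ + a₁₂ + 4*ε ≤ b ∧ 2 + a₁ + a₄ + a₁₂ + 4*ε ≤ b ∧ 2 + a₂ + a₃ + a₁₂ + 4*ε ≤ b ∧ 2 + a₂ + a₄ + a₁₂ + 4*ε ≤ b ∧ 2 + a₃ + a₄ + 4*ε ≤ b ∧ 3 + a₁ + a₂ + a₃ + a₁₂ + 4*ε ≤ b ∧ 3 + a₁ + a₂ + a₄ + a₁₂ + 4*ε ≤ b ∧ 3 + a₁ + a₃ + a₄ + a₁₂ + 4*ε ≤ b ∧ 3 + a₂ + a₃ + a₄ + a₁₂ + 4*ε ≤ b ∧ 4 + a₁ + a₂ + a₃ + a₄ + a₁₂ + 4*ε ≤ b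 := by
      refine ⟨(min (b - (1 + a₁ + a₁₂)) (min (b - (1 + a₂ + a₁₂)) (min (b - (1 + a₃)) (min (b - (1 + a₄)) (min (b - (2 + (a₁ + a₂) + a₁₂)) (min (b - (2 + (a₁ + a₃) + a₁₂)) (min (b - (2 + (a₁ + a₄) + a₁₂)) (min (b - (2 + (a₂ + a₃) + a₁₂)) (min (b - (2 + (a₂ + a₄) + a₁₂)) (min (b - (2 + (a₃ + a₄))) (min (b - (3 + (a₁ + (a₂ + a₃)) + a₁₂)) (min (b - (3 + (a₁ + (a₂ + a₄)) + a₁₂)) (min (b - (3 + (a₁ + (a₃ + a₄)) + a₁₂)) (min (b - (3 + (a₂ + (a₃ + a₄)) + a₁₂)) ((b - (4 + (a₁ + (a₂ + (a₃ + a₄))) + a₁₂))))))))))))))))) / 4, ?_, ?_, ?_, ?_, ?_, ?_, ?_, ?_, ?_, ?_, ?_, ?_, ?_, ?_, ?_, ?_⟩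
      · have hMpos : 0 < min (b - (1 + a₁ + a₁₂)) (min (b - (1 + a₂ + a₁₂)) (min (b - (1 + a₃)) (min (b - (1 + a₄)) (min (b - (2 + (a₁ + a₂) + a₁₂)) (min (b - (2 + (a₁ + a₃) + a₁₂)) (min (b - (2 + (a₁ + a₄) + a₁₂)) (min (b - (2 + (a₂ + a₃) + a₁₂)) (min (b - (2 + (a₂ + a₄) + a₁₂)) (min (b - (2 + (a₃ + a₄))) (min (b - (3 + (a₁ + (a₂ + a₃)) + a₁₂)) (min (b - (3 + (a₁ + (a₂ + a₄)) + a₁₂)) (min (b - (3 + (a₁ + (a₃ + a₄)) + a₁₂)) (min (b - (3 + (a₂ + (a₃ + a₄)) + a₁₂)) ((b - (4 + (a₁ + (a₂ + (a₃ + a₄))) + a₁₂)))))))))))))))) := (lt_min (by linarith) (lt_min (by linarith) (lt_min (by linarith) (lt_min (by linarith) (lt_min (by linarith) (lt_min (by linarith) (lt_min (by linarith) (lt_min (by linarith) (lt_min (by linarith) (lt_min (by linarith) (lt_min (by linarith) (lt_min (by linarith) (lt_min (by linarith) (lt_min (by linarith) (by linarith)))))))))))))))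
        linarith
      · have hc : (min (b - (1 + a₁ + a₁₂)) (min (b - (1 + a₂ + a₁₂)) (min (b - (1 + a₃)) (min (b - (1 + a₄)) (min (b - (2 + (a₁ + a₂) + a₁₂)) (min (b - (2 + (a₁ + a₃) + a₁₂)) (min (b - (2 + (a₁ + a₄) + a₁₂)) (min (b - (2 + (a₂ + a₃) + a₁₂)) (min (b - (2 + (a₂ + a₄) + a₁₂)) (min (b - (2 + (a₃ + a₄))) (min (b - (3 + (a₁ + (a₂ + a₃)) + a₁₂)) (min (b - (3 + (a₁ + (a₂ + a₄)) + a₁₂)) (min (b - (3 + (a₁ + (a₃ + a₄)) + a₁₂)) (min (b - (3 + (a₂ + (a₃ + a₄)) + a₁₂)) ((b - (4 + (a₁ + (a₂ + (a₃ + a₄))) + a₁₂))))))))))))))))) ≤ (b - (1 + a₁ + a₁₂)) := min_le_left _ _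
        linarith
      · have hc : (min (b - (1 + a₁ + a₁₂)) (min (b - (1 + a₂ + a₁₂)) (min (b - (1 + a₃)) (min (b - (1 + a₄)) (min (b - (2 + (a₁ + a₂) + a₁₂)) (min (b - (2 + (a₁ + a₃) + a₁₂)) (min (b - (2 + (a₁ + a₄) + a₁₂)) (min (b - (2 + (a₂ + a₃) + a₁₂)) (min (b - (2 + (a₂ + a₄) + a₁₂)) (min (b - (2 + (a₃ + a₄))) (min (b - (3 + (a₁ + (a₂ + a₃)) + a₁₂)) (min (b - (3 + (a₁ + (a₂ + a₄)) + a₁₂)) (min (b - (3 + (a₁ + (a₃ + a₄)) + a₁₂)) (min (b - (3 + (a₂ + (a₃ + a₄)) + a₁₂)) ((b - (4 + (a₁ + (a₂ + (a₃ + a₄))) + a₁₂))))))))))))))))) ≤ (b - (1 + a₂ + a₁₂)) := le_trans (min_le_right _ _) (min_le_left _ _)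
        linarith
      · have hc : (min (b - (1 + a₁ + a₁₂)) (min (b - (1 + a₂ + a₁₂)) (min (b - (1 + a₃)) (min (b - (1 + a₄)) (min (b - (2 + (a₁ + a₂) + a₁₂)) (min (b - (2 + (a₁ + a₃) + a₁₂)) (min (b - (2 + (a₁ + a₄) + a₁₂)) (min (b - (2 + (a₂ + a₃) + a₁₂)) (min (b - (2 + (a₂ + a₄) + a₁₂)) (min (b - (2 + (a₃ + a₄))) (min (b - (3 + (a₁ + (a₂ + a₃)) + a₁₂)) (min (b - (3 + (a₁ + (a₂ + a₄)) + a₁₂)) (min (b - (3 + (a₁ + (a₃ + a₄)) + a₁₂)) (min (b - (3 + (a₂ + (a₃ + a₄)) + a₁₂)) ((b - (4 + (a₁ + (a₂ + (a₃ + a₄))) + a₁₂))))))))))))))))) ≤ (b - (1 + a₃)) := le_trans (min_le_right _ _) (le_trans (min_le_right _ _) (min_le_left _ _))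
        linarith
      · have hc : (min (b - (1 + a₁ + a₁₂)) (min (b - (1 + a₂ + a₁₂)) (min (b - (1 + a₃)) (min (b - (1 + a₄)) (min (b - (2 + (a₁ + a₂) + a₁₂)) (min (b - (2 + (a₁ + a₃) + a₁₂)) (min (b - (2 + (a₁ + a₄) + a₁₂)) (min (b - (2 + (a₂ + a₃) + a₁₂)) (min (b - (2 + (a₂ + a₄) + a₁₂)) (min (b - (2 + (a₃ + a₄))) (min (b - (3 + (a₁ + (a₂ + a₃)) + a₁₂)) (min (b - (3 + (a₁ + (a₂ + a₄)) + a₁₂)) (min (b - (3 + (a₁ + (a₃ + a₄)) + a₁₂)) (min (b - (3 + (a₂ + (a₃ + a₄)) + a₁₂)) ((b - (4 + (a₁ + (a₂ + (a₃ + a₄))) + a₁₂))))))))))))))))) ≤ (b - (1 + a₄)) := le_trans (min_le_right _ _) (le_trans (min_le_right _ _) (le_trans (min_le_right _ _) (min_le_left _ _)))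
        linarith
      · have hc : (min (b - (1 + a₁ + a₁₂)) (min (b - (1 + a₂ + a₁₂)) (min (b - (1 + a₃)) (min (b - (1 + a₄)) (min (b - (2 + (a₁ + a₂) + a₁₂)) (min (b - (2 + (a₁ + a₃) + a₁₂)) (min (b - (2 + (a₁ + a₄) + a₁₂)) (min (b - (2 + (a₂ + a₃) + a₁₂)) (min (b - (2 + (a₂ + a₄) + a₁₂)) (min (b - (2 + (a₃ + a₄))) (min (b - (3 + (a₁ + (a₂ + a₃)) + a₁₂)) (min (b - (3 + (a₁ + (a₂ + a₄)) + a₁₂)) (min (b - (3 + (a₁ + (a₃ + a₄)) + a₁₂)) (min (b - (3 + (a₂ + (a₃ + a₄)) + a₁₂)) ((b - (4 + (a₁ + (a₂ + (a₃ + a₄))) + a₁₂))))))))))))))))) ≤ (b - (2 + (a₁ + a₂) + a₁₂)) := le_trans (min_le_right _ _) (le_trans (min_le_right _ _) (le_trans (min_le_right _ _) (le_trans (min_le_right _ _) (min_le_left _ _))))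
        linarith
      · have hc : (min (b - (1 + a₁ + a₁₂)) (min (b - (1 + a₂ + a₁₂)) (min (b - (1 + a₃)) (min (b - (1 + a₄)) (min (b - (2 + (a₁ + a₂) + a₁₂)) (min (b - (2 + (a₁ + a₃) + a₁₂)) (min (b - (2 + (a₁ + a₄) + a₁₂)) (min (b - (2 + (a₂ + a₃) + a₁₂)) (min (b - (2 + (a₂ + a₄) + a₁₂)) (min (b - (2 + (a₃ + a₄))) (min (b - (3 + (a₁ + (a₂ + a₃)) + a₁₂)) (min (b - (3 + (a₁ + (a₂ + a₄)) + a₁₂)) (min (b - (3 + (a₁ + (a₃ + a₄)) + a₁₂)) (min (b - (3 + (a₂ + (a₃ + a₄)) + a₁₂)) ((b - (4 + (a₁ + (a₂ + (a₃ + a₄))) + a₁₂))))))))))))))))) ≤ (b - (2 + (a₁ + a₃) + a₁₂)) := le_trans (min_le_right _ _) (le_trans (min_le_right _ _) (le_trans (min_le_right _ _) (le_trans (min_le_right _ _) (le_trans (min_le_right _ _) (min_le_left _ _)))))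
        linarith
      · have hc : (min (b - (1 + a₁ + a₁₂)) (min (b - (1 + a₂ + a₁₂)) (min (b - (1 + a₃)) (min (b - (1 + a₄)) (min (b - (2 + (a₁ + a₂) + a₁₂)) (min (b - (2 + (a₁ + a₃) + a₁₂)) (min (b - (2 + (a₁ + a₄) + a₁₂)) (min (b - (2 + (a₂ + a₃) + a₁₂)) (min (b - (2 + (a₂ + a₄) + a₁₂)) (min (b - (2 + (a₃ + a₄))) (min (b - (3 + (a₁ + (a₂ + a₃)) + a₁₂)) (min (b - (3 + (a₁ + (a₂ + a₄)) + a₁₂)) (min (b - (3 + (a₁ + (a₃ + a₄)) + a₁₂)) (min (b - (3 + (a₂ + (a₃ + a₄)) + a₁₂)) ((b - (4 + (a₁ + (a₂ + (a₃ + a₄))) + a₁₂))))))))))))))))) ≤ (b - (2 + (a₁ + a₄) + a₁₂)) := le_trans (min_le_right _ _) (le_trans (min_le_right _ _) (le_trans (min_le_right _ _) (le_trans (min_le_right _ _) (le_trans (min_le_right _ _) (le_trans (min_le_right _ _) (min_le_left _ _))))))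
        linarith
      · have hc : (min (b - (1 + a₁ + a₁₂)) (min (b - (1 + a₂ + a₁₂)) (min (b - (1 + a₃)) (min (b - (1 + a₄)) (min (b - (2 + (a₁ + a₂) + a₁₂)) (min (b - (2 + (a₁ + a₃) + a₁₂)) (min (b - (2 + (a₁ + a₄) + a₁₂)) (min (b - (2 + (a₂ + a₃) + a₁₂)) (min (b - (2 + (a₂ + a₄) + a₁₂)) (min (b - (2 + (a₃ + a₄))) (min (b - (3 + (a₁ + (a₂ + a₃)) + a₁₂)) (min (b - (3 + (a₁ + (a₂ + a₄)) + a₁₂)) (min (b - (3 + (a₁ + (a₃ + a₄)) + a₁₂)) (min (b - (3 + (a₂ + (a₃ + a₄)) + a₁₂)) ((b - (4 + (a₁ + (a₂ + (a₃ + a₄))) + a₁₂))))))))))))))))) ≤ (b - (2 + (a₂ + a₃) + a₁₂)) := le_trans (min_le_right _ _) (le_trans (min_le_right _ _) (le_trans (min_le_right _ _) (le_trans (min_le_right _ _) (le_trans (min_le_right _ _) (le_trans (min_le_right _ _) (le_trans (min_le_right _ _) (min_le_left _ _)))))))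
        linarith
      · have hc : (min (b - (1 + a₁ + a₁₂)) (min (b - (1 + a₂ + a₁₂)) (min (b - (1 + a₃)) (min (b - (1 + a₄)) (min (b - (2 + (a₁ + a₂) + a₁₂)) (min (b - (2 + (a₁ + a₃) + a₁₂)) (min (b - (2 + (a₁ + a₄) + a₁₂)) (min (b - (2 + (a₂ + a₃) + a₁₂)) (min (b - (2 + (a₂ + a₄) + a₁₂)) (min (b - (2 + (a₃ + a₄))) (min (b - (3 + (a₁ + (a₂ + a₃)) + a₁₂)) (min (b - (3 + (a₁ + (a₂ + a₄)) + a₁₂)) (min (b - (3 + (a₁ + (a₃ + a₄)) + a₁₂)) (min (b - (3 + (a₂ + (a₃ + a₄)) + a₁₂)) ((b - (4 + (a₁ + (a₂ + (a₃ + a₄))) + a₁₂))))))))))))))))) ≤ (b - (2 + (a₂ + a₄) + a₁₂)) := le_trans (min_le_right _ _) (le_trans (min_le_right _ _) (le_trans (min_le_right _ _) (le_trans (min_le_right _ _) (le_trans (min_le_right _ _) (le_trans (min_le_right _ _) (le_trans (min_le_right _ _) (le_trans (min_le_right _ _) (min_le_left _ _))))))))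
        linarith
      · have hc : (min (b - (1 + a₁ + a₁₂)) (min (b - (1 + a₂ + a₁₂)) (min (b - (1 + a₃)) (min (b - (1 + a₄)) (min (b - (2 + (a₁ + a₂) + a₁₂)) (min (b - (2 + (a₁ + a₃) + a₁₂)) (min (b - (2 + (a₁ + a₄) + a₁₂)) (min (b - (2 + (a₂ + a₃) + a₁₂)) (min (b - (2 + (a₂ + a₄) + a₁₂)) (min (b - (2 + (a₃ + a₄))) (min (b - (3 + (a₁ + (a₂ + a₃)) + a₁₂)) (min (b - (3 + (a₁ + (a₂ + a₄)) + a₁₂)) (min (b - (3 + (a₁ + (a₃ + a₄)) + a₁₂)) (min (b - (3 + (a₂ + (a₃ + a₄)) + a₁₂)) ((b - (4 + (a₁ + (a₂ + (a₃ + a₄))) + a₁₂))))))))))))))))) ≤ (b - (2 + (a₃ + a₄))) := le_trans (min_le_right _ _) (le_trans (min_le_right _ _) (le_trans (min_le_right _ _) (le_trans (min_le_right _ _) (le_trans (min_le_right _ _) (le_trans (min_le_right _ _) (le_trans (min_le_right _ _) (le_trans (min_le_right _ _) (le_trans (min_le_right _ _) (min_le_left _ _)))))))))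
        linarith
      · have hc : (min (b - (1 + a₁ + a₁₂)) (min (b - (1 + a₂ + a₁₂)) (min (b - (1 + a₃)) (min (b - (1 + a₄)) (min (b - (2 + (a₁ + a₂) + a₁₂)) (min (b - (2 + (a₁ + a₃) + a₁₂)) (min (b - (2 + (a₁ + a₄) + a₁₂)) (min (b - (2 + (a₂ + a₃) + a₁₂)) (min (b - (2 + (a₂ + a₄) + a₁₂)) (min (b - (2 + (a₃ + a₄))) (min (b - (3 + (a₁ + (a₂ + a₃)) + a₁₂)) (min (b - (3 + (a₁ + (a₂ + a₄)) + a₁₂)) (min (b - (3 + (a₁ + (a₃ + a₄)) + a₁₂)) (min (b - (3 + (a₂ + (a₃ + a₄)) + a₁₂)) ((b - (4 + (a₁ + (a₂ + (a₃ + a₄))) + a₁₂))))))))))))))))) ≤ (b - (3 + (a₁ + (a₂ + a₃)) + a₁₂)) := le_trans (min_le_right _ _) (le_trans (min_le_right _ _) (le_trans (min_le_right _ _) (le_trans (min_le_right _ _) (le_trans (min_le_right _ _) (le_trans (min_le_right _ _) (le_trans (min_le_right _ _) (le_trans (min_le_right _ _) (le_trans (min_le_right _ _) (le_trans (min_le_right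 _ _) (min_le_left _ _))))))))))
        linarith
      · have hc : (min (b - (1 + a₁ + a₁₂)) (min (b - (1 + a₂ + a₁₂)) (min (b - (1 + a₃)) (min (b - (1 + a₄)) (min (b - (2 + (a₁ + a₂) + a₁₂)) (min (b - (2 + (a₁ + a₃) + a₁₂)) (min (b - (2 + (a₁ + a₄) + a₁₂)) (min (b - (2 + (a₂ + a₃) + a₁₂)) (min (b - (2 + (a₂ + a₄) + a₁₂)) (min (b - (2 + (a₃ + a₄))) (min (b - (3 + (a₁ + (a₂ + a₃)) + a₁₂)) (min (b - (3 + (a₁ + (a₂ + a₄)) + a₁₂)) (min (b - (3 + (a₁ + (a₃ + a₄)) + a₁₂)) (min (b - (3 + (a₂ + (a₃ + a₄)) + a₁₂)) ((b - (4 + (a₁ + (a₂ + (a₃ + a₄))) + a₁₂))))))))))))))))) ≤ (b - (3 + (a₁ + (a₂ + a₄)) + a₁₂)) := le_trans (min_le_right _ _) (le_trans (min_le_right _ _) (le_trans (min_le_right _ _) (le_trans (min_le_right _ _) (le_trans (min_le_right _ _) (le_trans (min_le_right _ _) (le_trans (min_le_right _ _) (le_trans (min_le_right _ _) (le_trans (min_le_right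 _ _) (le_trans (min_le_right _ _) (le_trans (min_le_right _ _) (min_le_left _ _)))))))))))
        linarith
      · have hc : (min (b - (1 + a₁ + a₁₂)) (min (b - (1 + a₂ + a₁₂)) (min (b - (1 + a₃)) (min (b - (1 + a₄)) (min (b - (2 + (a₁ + a₂) + a₁₂)) (min (b - (2 + (a₁ + a₃) + a₁₂)) (min (b - (2 + (a₁ + a₄) + a₁₂)) (min (b - (2 + (a₂ + a₃) + a₁₂)) (min (b - (2 + (a₂ + a₄) + a₁₂)) (min (b - (2 + (a₃ + a₄))) (min (b - (3 + (a₁ + (a₂ + a₃)) + a₁₂)) (min (b - (3 + (a₁ + (a₂ + a₄)) + a₁₂)) (min (b - (3 + (a₁ + (a₃ + a₄)) + a₁₂)) (min (b - (3 + (a₂ + (a₃ + a₄)) + a₁₂)) ((b - (4 + (a₁ + (a₂ + (a₃ + a₄))) + a₁₂))))))))))))))))) ≤ (b - (3 + (a₁ + (a₃ + a₄)) + a₁₂)) := le_trans (min_le_right _ _) (le_trans (min_le_right _ _) (le_trans (min_le_right _ _) (le_trans (min_le_right _ _) (le_trans (min_le_right _ _) (le_trans (min_le_right _ _) (le_trans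 (min_le_right _ _) (le_trans (min_le_right _ _) (le_trans (min_le_right _ _) (le_trans (min_le_right _ _) (le_trans (min_le_right _ _) (le_trans (min_le_right _ _) (min_le_left _ _))))))))))))
        linarith
      · have hc : (min (b - (1 + a₁ + a₁₂)) (min (b - (1 + a₂ + a₁₂)) (min (b - (1 + a₃)) (min (b - (1 + a₄)) (min (b - (2 + (a₁ + a₂) + a₁₂)) (min (b - (2 + (a₁ + a₃) + a₁₂)) (min (b - (2 + (a₁ + a₄) + a₁₂)) (min (b - (2 + (a₂ + a₃) + a₁₂)) (min (b - (2 + (a₂ + a₄) + a₁₂)) (min (b - (2 + (a₃ + a₄))) (min (b - (3 + (a₁ + (a₂ + a₃)) + a₁₂)) (min (b - (3 + (a₁ + (a₂ + a₄)) + a₁₂)) (min (b - (3 + (a₁ + (a₃ + a₄)) + a₁₂)) (min (b - (3 + (a₂ + (a₃ + a₄)) + a₁₂)) ((b - (4 + (a₁ + (a₂ + (a₃ + a₄))) + a₁₂))))))))))))))))) ≤ (b - (3 + (a₂ + (a₃ + a₄)) + a₁₂)) := le_trans (min_le_right _ _) (le_trans (min_le_right _ _) (le_trans (min_le_right _ _)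 (le_trans (min_le_right _ _) (le_trans (min_le_right _ _) (le_trans (min_le_right _ _) (le_trans (min_le_right _ _) (le_trans (min_le_right _ _) (le_trans (min_le_right _ _) (le_trans (min_le_right _ _) (le_trans (min_le_right _ _) (le_trans (min_le_right _ _) (le_trans (min_le_right _ _) (min_le_left _ _)))))))))))))
        linarith
      · have hc : (min (b - (1 + a₁ + a₁₂)) (min (b - (1 + a₂ + a₁₂)) (min (b - (1 + a₃)) (min (b - (1 + a₄)) (min (b - (2 + (a₁ + a₂) + a₁₂)) (min (b - (2 + (a₁ + a₃) + a₁₂)) (min (b - (2 + (a₁ + a₄) + a₁₂)) (min (b - (2 + (a₂ + a₃) + a₁₂)) (min (b - (2 + (a₂ + a₄) + a₁₂)) (min (b - (2 + (a₃ + a₄))) (min (b - (3 + (a₁ + (a₂ + a₃)) + a₁₂)) (min (b - (3 + (a₁ + (a₂ + a₄)) + a₁₂)) (min (b - (3 + (a₁ + (a₃ + a₄)) + a₁₂)) (min (b - (3 + (a₂ + (a₃ + a₄)) + a₁₂)) ((b - (4 + (a₁ + (a₂ + (a₃ + a₄))) + a₁₂))))))))))))))))) ≤ (b - (4 + (a₁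 + (a₂ + (a₃ + a₄))) + a₁₂)) := le_trans (min_le_right _ _) (le_trans (min_le_right _ _) (le_trans (min_le_right _ _) (le_trans (min_le_right _ _) (le_trans (min_le_right _ _) (le_trans (min_le_right _ _) (le_trans (min_le_right _ _) (le_trans (min_le_right _ _) (le_trans (min_le_right _ _) (le_trans (min_le_right _ _) (le_trans (min_le_right _ _) (le_trans (min_le_right _ _) (le_trans (min_le_right _ _) (min_le_right _ _)))))))))))))
        linarith
    have hsum := (summable_g (c := -(1+ε)) (by linarith)).mul_left ((2:ℝ) ^ |a₁₂| * 4 ^ |b|)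
    refine Summable.of_nonneg_of_le (fun i => by positivity) (fun i => ?_) hsum
    have e1 : (1:ℝ) ≤ ((i 0 : ℕ) : ℝ) := by exact_mod_cast (i 0).one_le
    have e2 : (1:ℝ) ≤ ((i 1 : ℕ) : ℝ) := by exact_mod_cast (i 1).one_le
    have e3 : (1:ℝ) ≤ ((i 2 : ℕ) : ℝ) := by exact_mod_cast (i 2).one_le
    have e4 : (1:ℝ) ≤ ((i 3 : ℕ) : ℝ) := by exact_mod_cast (i 3).one_le
    exact f_pointwise e1 e2 e3 e4 (by linarith) (by linarith) (by linarith) (by linarith)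
      (by linarith) (by linarith) (by linarith) (by linarith) (by linarith) (by linarith)
      (by linarith) (by linarith) (by linarith) (by linarith) (by linarith)
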